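/- arXiv:2310.02670 — 6 statements merged into one kernel-verified Lean document; each statement's English description precedes it below -/
import Mathlib

section
/- Fix a tuple of strings (S₁,…,Sₙ) and an integer ℓ ≥ 1, and let I_ℓ = { (i,j) : (i,j) is interesting and 2^{ℓ-1} ≤ j - i ≤ 2^ℓ - 1 }. Say a pair (i,j) ∈ I_ℓ is of the first type if i = max{ i' : (i',j) ∈ I_ℓ }, and of the second type otherwise. Then any two distinct pairs of the second type in I_ℓ have different first components. -/
def lcpLen {α : Type*} [DecidableEq α] : List α → List α → ℕ
  | a :: s, b :: t => if a = b then lcpLen s t + 1 else 0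
  | _, _ => 0

/-- A pair `(i,j)` is interesting for the tuple `S` if `i < j` and every index strictly
between `i` and `j` has a smaller LCP with `Sᵢ` than `Sⱼ` does. -/
def Interesting {α : Type*} [DecidableEq α] (S : ℕ → List α) (i j : ℕ) : Prop :=
  i < j ∧ ∀ l, i < l → l < j → lcpLen (S i) (S l) < lcpLen (S i) (S j)

/-- Membership in the class `I_ℓ`: interesting pairs whose gap lies in the dyadic
range `[2^(ℓ-1), 2^ℓ - 1]`. -/
def InClass {α : Type*} [DecidableEq α] (S : ℕ → List α) (l : ℕ) (i j : ℕ) : Prop :=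
  Interesting S i j ∧ 2 ^ (l - 1) ≤ j - i ∧ j - i ≤ 2 ^ l - 1

/-- A pair of the first type: its first component is maximal among pairs in `I_ℓ`
with the same second component. -/
def FirstType {α : Type*} [DecidableEq α] (S : ℕ → List α) (l : ℕ) (i j : ℕ) : Prop :=
  InClass S l i j ∧ ∀ i', InClass S l i' j → i' ≤ i

def SecondType {α : Type*} [DecidableEq α] (S : ℕ → List α) (l : ℕ) (i j : ℕ) : Prop :=
  InClass S l i j ∧ ¬ FirstType S l i j

/-!
If `(i, j)` is interesting and `i < k < j`, then `LCP(Sᵢ, Sₖ) = LCP(Sₖ, Sⱼ)`, since `LCP` is an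
ultrametric-like quantity. Suppose `(i, j)` and `(i, j')` are both of the second type with
`j < j'`. As `(i, j')` is not of the first type there is `(a, j') ∈ I_ℓ` with `i < a`; the dyadic
gap bounds force `a < j`. Applying the fact above to `(i, j)` and `(i, j')` gives
`LCP(Sₐ, Sⱼ) = LCP(Sᵢ, Sₐ) = LCP(Sₐ, Sⱼ')`, while `(a, j')` being interesting gives
`LCP(Sₐ, Sⱼ) < LCP(Sₐ, Sⱼ')`.
-/

section Lcp

variable {α : Type*} [DecidableEq α]

lemma lcpLen_comm : ∀ s t : List α, lcpLen s t = lcpLen t s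
  | [], [] | [], _ :: _ | _ :: _, [] => rfl
  | a :: s, b :: t => by
    by_cases h : a = b
    · simp [lcpLen, h, lcpLen_comm s t]
    · simp [lcpLen, h, Ne.symm h]

lemma min_lcpLen_le_lcpLen : ∀ s t u : List α, min (lcpLen s t) (lcpLen t u) ≤ lcpLen s u
  | [], _, _ | _ :: _, [], _ => by simp [lcpLen]
  | _ :: _, _ :: _, [] => by simp only [lcpLen]; split <;> simp
  | a :: s, b :: t, c :: u => by
    by_cases hab : a = b
    · by_cases hbc : b = c
      · subst hab hbc
        simpa [lcpLen] using min_lcpLen_le_lcpLen s t u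
      · simp [lcpLen, hab, hbc]
    · simp [lcpLen, hab]

lemma lcpLen_eq_of_lcpLen_lt {s t u : List α} (h : lcpLen s t < lcpLen s u) :
    lcpLen t u = lcpLen s t := by
  have hle := min_lcpLen_le_lcpLen t s u
  have hge := min_lcpLen_le_lcpLen s u t
  rw [lcpLen_comm t s] at hle
  rw [lcpLen_comm u t] at hge
  omega

end Lcp

section Classes

variable {α : Type*} [DecidableEq α] {S : ℕ → List α} {l : ℕ}

lemma Interesting.lcpLen_eq {i k j : ℕ} (h : Interesting S i j) (hik : i < k) (hkj : k < j) :
    lcpLen (S k) (S j) = lcpLen (S i) (S k) :=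
  lcpLen_eq_of_lcpLen_lt (h.2 k hik hkj)

lemma InClass.fst_lt_add {i a j : ℕ} (hi : InClass S l i j) (ha : InClass S l a j) :
    a < i + 2 ^ (l - 1) := by
  obtain ⟨⟨-, -⟩, -, hi_gap⟩ := hi
  obtain ⟨⟨haj, -⟩, ha_gap, -⟩ := ha
  have : 2 ^ l ≤ 2 ^ (l - 1) * 2 := by
    rw [← pow_succ]; exact Nat.pow_le_pow_right two_pos (by omega)
  omega

lemma SecondType.exists_inClass_lt {i j : ℕ} (h : SecondType S l i j) :
    ∃ a, InClass S l a j ∧ i < a := by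
  by_contra! hmax
  exact h.2 ⟨h.1, hmax⟩

lemma not_inClass_of_secondType_of_lt {i j j' : ℕ} (h' : SecondType S l i j') (hjj' : j < j') :
    ¬ InClass S l i j := by
  intro hj
  obtain ⟨a, ha, hia⟩ := h'.exists_inClass_lt
  have haj : a < j := by
    have := h'.1.fst_lt_add ha
    have := hj.2.1
    omega
  have h_eq : lcpLen (S a) (S j) = lcpLen (S a) (S j') := by
    rw [hj.1.lcpLen_eq hia haj, h'.1.1.lcpLen_eq hia (haj.trans hjj')]
  exact (ha.1.2 j haj hjj').ne h_eq

end Classes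

theorem second_type_distinct_first_components_general {α : Type*} [DecidableEq α]
    (S : ℕ → List α) (l : ℕ) (i j j' : ℕ)
    (h1 : SecondType S l i j) (h2 : SecondType S l i j') :
    j = j' := by
  rcases lt_trichotomy j j' with h | h | h
  · exact absurd h1.1 (not_inClass_of_secondType_of_lt h2 h)
  · exact h
  · exact absurd h2.1 (not_inClass_of_secondType_of_lt h1 h)

theorem second_type_distinct_first_components {α : Type*} [DecidableEq α]
    (S : ℕ → List α) (l : ℕ) (hl : 1 ≤ l) (i j j' : ℕ)
    (h1 : SecondType S l i j) (h2 : SecondType S l i j') :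
    j = j' :=
  second_type_distinct_first_components_general S l i j j' h1 h2
end

section
/- For n ≥ 2, let S₀,…,S_{n-1} be the binary strings with Sᵢ the little-endian binary representation of i padded to length ⌈log₂ n⌉. Then a pair (i,j) with i < j is interesting (meaning LCP(Sᵢ,Sₗ) < LCP(Sᵢ,Sⱼ) for all i < ℓ < j) if and only if j - i is a power of 2. Consequently, the number of interesting pairs is Ω(n log n). -/
/-- `Sbin n i` is the little-endian binary representation of `i`,
padded with zeros to length `⌈log₂ n⌉`. -/
def Sbin (n i : ℕ) : List ℕ :=
  (List.range (Nat.clog 2 n)).map (fun k => i / 2 ^ k % 2)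

/-!
In little-endian binary, `i` and `i + 2 ^ v * c` with `c` odd agree in the digits below `v` and
differ in digit `v`, so `LCP(Sᵢ, Sⱼ) = v₂(j - i)`. Hence `(i, j)` is interesting iff
`v₂(ℓ) < v₂(j - i)` for all `0 < ℓ < j - i`. Taking `ℓ = 2 ^ ⌊log₂ (j - i)⌋` forces `j - i` to be a
power of two, and conversely `v₂(ℓ) ≤ log₂ ℓ < t` for `ℓ < 2 ^ t`. The pairs `(m, m + 2 ^ t)` with
`t < log₂ n` and `m < n / 2` are distinct and lie below `n`, which gives the count.
-/

theorem forall_padicValNat_lt_iff_eq_pow {p d : ℕ} [Fact p.Prime] (hd : d ≠ 0) :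
    (∀ e, 0 < e → e < d → padicValNat p e < padicValNat p d) ↔ ∃ t, d = p ^ t := by
  constructor
  · intro h
    refine ⟨Nat.log p d, ?_⟩
    by_contra hne
    have hlt : p ^ Nat.log p d < d := (Nat.pow_log_le_self p hd).lt_of_ne (Ne.symm hne)
    have := h _ (pow_pos (Fact.out : p.Prime).pos _) hlt
    rw [padicValNat.prime_pow] at this
    exact (padicValNat_le_nat_log d).not_gt this
  · rintro ⟨t, rfl⟩ e he hlt
    rw [padicValNat.prime_pow]
    exact (padicValNat_le_nat_log e).trans_lt (Nat.log_lt_of_lt_pow he.ne' hlt)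

theorem lcpLen_map_range {α : Type*} [DecidableEq α] {f g : ℕ → α} {L k : ℕ} (hk : k ≤ L)
    (hagree : ∀ m < k, f m = g m) (hdiff : k < L → f k ≠ g k) :
    lcpLen ((List.range L).map f) ((List.range L).map g) = k := by
  induction L generalizing f g k with
  | zero => simp [lcpLen, Nat.le_zero.mp hk]
  | succ L ih =>
    simp only [List.range_succ_eq_map, List.map_cons, List.map_map]
    cases k with
    | zero => simp [lcpLen, hdiff L.succ_pos]
    | succ k =>
      rw [lcpLen, if_pos (hagree 0 k.succ_pos), ih (f := f ∘ Nat.succ) (g := g ∘ Nat.succ)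
        (by omega) (fun m hm => hagree (m + 1) (by omega)) (fun h => hdiff (by omega))]

theorem add_two_pow_mul_div_two_pow_mod_two (i k c : ℕ) :
    (i + 2 ^ k * c) / 2 ^ k % 2 = (i / 2 ^ k + c) % 2 := by
  rw [Nat.add_mul_div_left _ _ (Nat.two_pow_pos k)]

/-- Since `2 ^ v₂(j - i) ≤ j - i < n ≤ 2 ^ ⌈log₂ n⌉`, the padding never cuts the common
prefix short. -/
theorem lcpLen_Sbin {n i j : ℕ} (hij : i < j) (hjn : j < n) :
    lcpLen (Sbin n i) (Sbin n j) = padicValNat 2 (j - i) := by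
  obtain ⟨v, c, hc, hd⟩ := Nat.exists_eq_two_pow_mul_odd (n := j - i) (by omega)
  have hc0 : c ≠ 0 := hc.pos.ne'
  have hv : padicValNat 2 (j - i) = v := by
    rw [hd, padicValNat.mul (by positivity) hc0, padicValNat.prime_pow,
      padicValNat.eq_zero_of_not_dvd hc.not_two_dvd_nat, add_zero]
  have hvL : v < Nat.clog 2 n := by
    have : 2 ^ v < 2 ^ Nat.clog 2 n :=
      calc 2 ^ v ≤ j - i := hd ▸ Nat.le_mul_of_pos_right _ (Nat.pos_of_ne_zero hc0)
        _ < n := by omega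
        _ ≤ 2 ^ Nat.clog 2 n := Nat.le_pow_clog one_lt_two n
    exact (Nat.pow_lt_pow_iff_right one_lt_two).mp this
  have hj : j = i + 2 ^ v * c := by omega
  rw [hv, Sbin, Sbin]
  refine lcpLen_map_range hvL.le (fun m hm => ?_) (fun _ => ?_)
  · have : j = i + 2 ^ m * (2 ^ (v - m) * c) := by
      rw [hj, ← mul_assoc, ← pow_add, Nat.add_sub_cancel' hm.le]
    rw [this, add_two_pow_mul_div_two_pow_mod_two]
    have : 2 ∣ 2 ^ (v - m) * c := dvd_mul_of_dvd_left (dvd_pow_self 2 (by omega)) c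
    omega
  · rw [hj, add_two_pow_mul_div_two_pow_mod_two]
    have := Nat.odd_iff.mp hc
    omega

theorem interesting_Sbin_iff {n i j : ℕ} (hij : i < j) (hjn : j < n) :
    Interesting (Sbin n) i j ↔ ∀ e, 0 < e → e < j - i → padicValNat 2 e < padicValNat 2 (j - i) := by
  rw [Interesting, lcpLen_Sbin hij hjn]
  constructor
  · rintro ⟨-, h⟩ e he hlt
    have hlcp := h (i + e) (by omega) (by omega)
    rwa [lcpLen_Sbin (by omega) (by omega), Nat.add_sub_cancel_left] at hlcp
  · intro h
    refine ⟨hij, fun l hil hlj => ?_⟩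
    rw [lcpLen_Sbin hil (by omega)]
    exact h (l - i) (by omega) (by omega)

theorem log_mul_half_le_ncard_pow_two_gaps (n : ℕ) :
    Nat.log 2 n * (n / 2) ≤ {p : ℕ × ℕ | p.1 < p.2 ∧ p.2 < n ∧ ∃ t, p.2 - p.1 = 2 ^ t}.ncard := by
  have hgap : ∀ t < Nat.log 2 n, 2 ^ t ≤ n / 2 := fun t ht => by
    have hn : n ≠ 0 := by rintro rfl; simp at ht
    have : 2 ^ (t + 1) ≤ n := (Nat.pow_le_pow_right two_pos ht).trans (Nat.pow_log_le_self 2 hn)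
    rw [pow_succ] at this
    omega
  calc Nat.log 2 n * (n / 2)
        = (↑(Finset.range (Nat.log 2 n) ×ˢ Finset.range (n / 2)) : Set (ℕ × ℕ)).ncard := by
        rw [Set.ncard_coe_finset, Finset.card_product, Finset.card_range, Finset.card_range]
    _ ≤ _ := by
      refine Set.ncard_le_ncard_of_injOn (fun q => (q.2, q.2 + 2 ^ q.1)) ?_ ?_ ?_
      · rintro ⟨t, m⟩ hq
        simp only [Finset.coe_product, Finset.coe_range, Set.mem_prod, Set.mem_Iio] at hq
        have := hgap t hq.1
        refine ⟨by simp, ?_, t, by simp⟩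
        dsimp only
        omega
      · rintro ⟨t₁, m₁⟩ - ⟨t₂, m₂⟩ - h
        simp only [Prod.mk.injEq] at h
        obtain ⟨rfl, h⟩ := h
        simp [Nat.pow_right_injective le_rfl (by omega : 2 ^ t₁ = 2 ^ t₂)]
      · exact ((Set.finite_Iio n).prod (Set.finite_Iio n)).subset
          fun p hp => ⟨hp.1.trans hp.2.1, hp.2.1⟩

theorem binary_interesting_iff_power_of_two_general (n : ℕ) :
    (∀ i j, i < j → j < n → (Interesting (Sbin n) i j ↔ ∃ t, j - i = 2 ^ t)) ∧
    Nat.log 2 n * (n / 2) ≤ {p : ℕ × ℕ | p.2 < n ∧ Interesting (Sbin n) p.1 p.2}.ncard := by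
  have hiff : ∀ i j, i < j → j < n → (Interesting (Sbin n) i j ↔ ∃ t, j - i = 2 ^ t) :=
    fun i j hij hjn => by
      rw [interesting_Sbin_iff hij hjn, forall_padicValNat_lt_iff_eq_pow (by omega)]
  refine ⟨hiff, (log_mul_half_le_ncard_pow_two_gaps n).trans_eq (congrArg Set.ncard ?_)⟩
  ext ⟨i, j⟩
  exact ⟨fun ⟨hij, hjn, hpow⟩ => ⟨hjn, (hiff i j hij hjn).mpr hpow⟩,
    fun ⟨hjn, hint⟩ => ⟨hint.1, hjn, (hiff i j hint.1 hjn).mp hint⟩⟩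

theorem binary_interesting_iff_power_of_two (n : ℕ) (hn : 2 ≤ n) :
    (∀ i j, i < j → j < n → (Interesting (Sbin n) i j ↔ ∃ t, j - i = 2 ^ t)) ∧
    Nat.log 2 n * (n / 2) ≤ {p : ℕ × ℕ | p.2 < n ∧ Interesting (Sbin n) p.1 p.2}.ncard :=
  binary_interesting_iff_power_of_two_general n
end

section
/- Let ε ∈ (0,1], a = 1+ε/3, δ_h = ⌊ε·a^{h+1}/3⌋, H_h = ⌈a^{h+2}⌉. Suppose u, d are integers with a^h ≤ d − u ≤ a^{h+1} − 1, and let x be the largest integer multiple of δ_h smaller than u (assume δ_h ≥ 1). Then x < u and x + H_h > d. -/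
theorem grid_anchor_covers (ε : ℝ) (h0 : 0 < ε) (h1 : ε ≤ 1) (h : ℕ)
    (a : ℝ) (ha : a = 1 + ε / 3)
    (δ Hh : ℤ) (hδ : δ = ⌊ε * a ^ (h + 1) / 3⌋) (hδ1 : 1 ≤ δ)
    (hH : Hh = ⌈a ^ (h + 2)⌉)
    (u d : ℤ) (hu1 : 1 ≤ u)
    (hlo : (a : ℝ) ^ h ≤ ((d - u : ℤ) : ℝ)) (hhi : ((d - u : ℤ) : ℝ) ≤ a ^ (h + 1) - 1)
    (x : ℤ) (hx : x = δ * ((u - 1) / δ)) :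
    x < u ∧ (d : ℝ) < (x : ℝ) + (Hh : ℝ) := by
  have hδpos : 0 < δ := hδ1
  have hxle : x ≤ u - 1 := by
    rw [hx, mul_comm]
    exact Int.ediv_mul_le _ (by omega)
  have hxgt : u - 1 < x + δ := by
    have h2 := Int.lt_ediv_add_one_mul_self (u - 1) hδpos
    rw [add_mul, one_mul, mul_comm] at h2
    rw [hx]; linarith
  refine ⟨by omega, ?_⟩
  have hxge : u - δ ≤ x := by omega
  have hδle : (δ : ℝ) ≤ ε * a ^ (h + 1) / 3 := by
    rw [hδ]; exact Int.floor_le _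
  have hHge : a ^ (h + 2) ≤ (Hh : ℝ) := by
    rw [hH]; exact Int.le_ceil _
  have hexp : a ^ (h + 2) = a ^ (h + 1) + ε * a ^ (h + 1) / 3 := by
    rw [pow_succ, ha]; ring
  have hxR : (u : ℝ) - (δ : ℝ) ≤ (x : ℝ) := by exact_mod_cast hxge
  have hdu : ((d : ℝ) - u) ≤ a ^ (h + 1) - 1 := by push_cast at hhi; linarith
  linarith
end

section
/- Let M be an n×m matrix over an alphabet. Define a triplet (u,d,ℓ) with u < d to be interesting if for every k with u < k < d, LCP(M[u][ℓ..m], M[k][ℓ..m]) < LCP(M[u][ℓ..m], M[d][ℓ..m]). Suppose M contains a matching frame (u,d,ℓ,r) (i.e., M[u][ℓ..r] = M[d][ℓ..r] and M[u..d][ℓ] = M[u..d][r]) and additionally suppose that for all k strictly between u and d, M[k][ℓ..r] ≠ M[u][ℓ..r]. Then (u,d,ℓ) is an interesting triplet. -/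
/-- The horizontal substring `M[i][l..m]` of row `i` (1-indexed columns `l` through `m`). -/
def rowFrom {α : Type*} (M : ℕ → ℕ → α) (i l m : ℕ) : List α :=
  (List.range (m + 1 - l)).map (fun t => M i (l + t))

lemma lcpLen_le_of_ne {α : Type*} [DecidableEq α] :
    ∀ (s t : List α) (j : ℕ), s[j]? ≠ t[j]? → lcpLen s t ≤ j := by
  intro s
  induction s with
  | nil => intro t j _; cases t <;> simp [lcpLen]
  | cons a s ih =>
    intro t j h
    cases t with
    | nil => simp [lcpLen]
    | cons b t =>
      cases j with
      | zero =>
        simp only [List.getElem?_cons_zero] at h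
        have : a ≠ b := fun e => h (by rw [e])
        simp [lcpLen, this]
      | succ j =>
        by_cases hab : a = b
        · simp only [lcpLen, hab, if_true]
          have := ih t j (by simpa using h)
          omega
        · simp [lcpLen, hab]

lemma le_lcpLen {α : Type*} [DecidableEq α] :
    ∀ (c : ℕ) (s t : List α), (∀ i, i < c → s[i]? = t[i]?) → c ≤ s.length →
      c ≤ lcpLen s t := by
  intro c
  induction c with
  | zero => intro s t _ _; exact Nat.zero_le _
  | succ c ih =>
    intro s t h hc
    cases s with
    | nil => simp at hc
    | cons a s =>
      cases t with
      | nil =>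
        have := h 0 (Nat.succ_pos _)
        simp at this
      | cons b t =>
        have hab : a = b := by
          have := h 0 (Nat.succ_pos _); simpa using this
        have := ih s t (fun i hi => by simpa using h (i+1) (by omega)) (by simpa using hc)
        simp only [lcpLen, hab, if_true]
        omega

theorem matching_frame_interesting_triplet {α : Type*} [DecidableEq α]
    (M : ℕ → ℕ → α) (n m : ℕ) (u d l r : ℕ)
    (hud : u < d) (hlr : l < r) (h1u : 1 ≤ u) (hdn : d ≤ n) (h1l : 1 ≤ l) (hrm : r ≤ m)
    (hrow : ∀ j, l ≤ j → j ≤ r → M u j = M d j)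
    (hcol : ∀ i, u ≤ i → i ≤ d → M i l = M i r)
    (hdiff : ∀ k, u < k → k < d → ¬ (∀ j, l ≤ j → j ≤ r → M k j = M u j)) :
    ∀ k, u < k → k < d →
      lcpLen (rowFrom M u l m) (rowFrom M k l m) <
        lcpLen (rowFrom M u l m) (rowFrom M d l m) := by
  intro k huk hkd
  have hlen : ∀ i, (rowFrom M i l m).length = m + 1 - l := by
    intro i; simp [rowFrom]
  have hget : ∀ i t, t < m + 1 - l → (rowFrom M i l m)[t]? = some (M i (l + t)) := by
    intro i t ht
    rw [rowFrom, List.getElem?_map, List.getElem?_range ht]; rfl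
  -- lower bound: lcp(u,d) ≥ r + 1 - l
  have h1 : r + 1 - l ≤ lcpLen (rowFrom M u l m) (rowFrom M d l m) := by
    apply le_lcpLen
    · intro i hi
      have hi' : i < m + 1 - l := by omega
      rw [hget u i hi', hget d i hi']
      congr 1
      exact hrow (l + i) (by omega) (by omega)
    · rw [hlen]; omega
  -- upper bound: lcp(u,k) ≤ j - l for some mismatch j
  obtain ⟨j, hj⟩ : ∃ j, l ≤ j ∧ j ≤ r ∧ M k j ≠ M u j := by
    have := hdiff k huk hkd
    push_neg at this
    obtain ⟨j, hj1, hj2, hj3⟩ := this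
    exact ⟨j, hj1, hj2, hj3⟩
  obtain ⟨hj1, hj2, hj3⟩ := hj
  have h2 : lcpLen (rowFrom M u l m) (rowFrom M k l m) ≤ j - l := by
    apply lcpLen_le_of_ne
    have ht : j - l < m + 1 - l := by omega
    rw [hget u _ ht, hget k _ ht]
    have : l + (j - l) = j := by omega
    rw [this]
    intro h
    exact hj3 (by injection h with h; exact h.symm)
  omega
end

section
/- Let (S₁,…,Sₙ) be a tuple of strings, fix i, and let j₁ > j₂ > ⋯ > j_z be all indices j such that (i,j) is an interesting pair, listed in decreasing order. Then j₁ = I(i,n) and j_k = I(i, j_{k−1} − 1) for every k ∈ [2..z], where I(i,j) = min{ k ∈ [i+1..j] : LCP(Sᵢ,Sₖ) = max_{k' ∈ [i+1..j]} LCP(Sᵢ,Sₖ') }. -/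
/-- `Lfun S i j` is the maximum LCP value between `Sᵢ` and any `Sₖ` for `k ∈ [i+1..j]`. -/
def Lfun {α : Type*} [DecidableEq α] (S : ℕ → List α) (i j : ℕ) : ℕ :=
  (Finset.Icc (i + 1) j).sup (fun k => lcpLen (S i) (S k))

/-- `Ifun S i j` is the least `k ∈ [i+1..j]` attaining the maximum LCP value `Lfun S i j`. -/
noncomputable def Ifun {α : Type*} [DecidableEq α] (S : ℕ → List α) (i j : ℕ) : ℕ :=
  sInf {k | i + 1 ≤ k ∧ k ≤ j ∧ lcpLen (S i) (S k) = Lfun S i j}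

lemma ifun_spec {α : Type*} [DecidableEq α] (S : ℕ → List α) (i j : ℕ) (hij : i < j) :
    (i + 1 ≤ Ifun S i j ∧ Ifun S i j ≤ j ∧
      lcpLen (S i) (S (Ifun S i j)) = Lfun S i j) ∧
    ∀ k, i + 1 ≤ k → k ≤ j → lcpLen (S i) (S k) = Lfun S i j → Ifun S i j ≤ k := by
  have hne : {k | i + 1 ≤ k ∧ k ≤ j ∧ lcpLen (S i) (S k) = Lfun S i j}.Nonempty := by
    obtain ⟨k, hk, hk2⟩ := Finset.exists_mem_eq_sup (Finset.Icc (i + 1) j)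
      (Finset.nonempty_Icc.2 hij) (fun k => lcpLen (S i) (S k))
    exact ⟨k, (Finset.mem_Icc.1 hk).1, (Finset.mem_Icc.1 hk).2, hk2.symm⟩
  exact ⟨Nat.sInf_mem hne, fun k h1 h2 h3 => Nat.sInf_le ⟨h1, h2, h3⟩⟩

lemma le_lfun {α : Type*} [DecidableEq α] (S : ℕ → List α) {i j l : ℕ}
    (h1 : i + 1 ≤ l) (h2 : l ≤ j) : lcpLen (S i) (S l) ≤ Lfun S i j :=
  Finset.le_sup (f := fun k => lcpLen (S i) (S k)) (Finset.mem_Icc.2 ⟨h1, h2⟩)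

lemma interesting_ifun {α : Type*} [DecidableEq α] (S : ℕ → List α) (i j : ℕ)
    (hij : i < j) : Interesting S i (Ifun S i j) := by
  obtain ⟨⟨h1, h2, h3⟩, hmin⟩ := ifun_spec S i j hij
  refine ⟨by omega, fun l hl1 hl2 => ?_⟩
  have hle : lcpLen (S i) (S l) ≤ Lfun S i j := le_lfun S hl1 (by omega)
  rw [h3]
  rcases lt_or_eq_of_le hle with h | h
  · exact h
  · exact absurd (hmin l hl1 (by omega) h) (by omega)

theorem interesting_pairs_structure {α : Type*} [DecidableEq α]
    (S : ℕ → List α) (n i : ℕ) (hin : i < n) :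
    IsGreatest {j | j ≤ n ∧ Interesting S i j} (Ifun S i n) ∧
    (∀ j j', j ≤ n → Interesting S i j → Interesting S i j' → j' < j →
      (∀ k, j' < k → k < j → ¬ Interesting S i k) → j' = Ifun S i (j - 1)) := by
  constructor
  · obtain ⟨⟨h1, h2, h3⟩, hmin⟩ := ifun_spec S i n hin
    refine ⟨⟨h2, interesting_ifun S i n hin⟩, fun j hj => ?_⟩
    obtain ⟨hjn, hij, hint⟩ := hj
    by_contra h
    push_neg at h
    have := hint (Ifun S i n) (by omega) h
    have h2' : lcpLen (S i) (S j) ≤ Lfun S i n := le_lfun S (by omega) hjn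
    omega
  · intro j j' hjn hj hj' hlt hnone
    obtain ⟨hij, hintj⟩ := hj
    obtain ⟨hij', hintj'⟩ := hj'
    have hij1 : i < j - 1 := by omega
    obtain ⟨⟨h1, h2, h3⟩, hmin⟩ := ifun_spec S i (j - 1) hij1
    set m := Ifun S i (j - 1) with hm
    have hle : lcpLen (S i) (S j') ≤ Lfun S i (j - 1) := le_lfun S (by omega) (by omega)
    have hj'm : j' ≤ m := by
      by_contra h
      push_neg at h
      have := hintj' m (by omega) h
      omega
    rcases Nat.lt_or_ge j' m with h | h
    · exact absurd (interesting_ifun S i (j - 1) hij1) (hnone m h (by omega))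
    · omega
end

section
/- Let M be an n×m matrix with inner rectangle (u□,d□,ℓ□,r□) such that every entry M[i][j] with u□ ≤ i ≤ d□ and ℓ□ ≤ j ≤ r□ is a unique symbol not occurring anywhere else in M. If M contains a surrounding matching frame (u,d,ℓ,r), then M contains a surrounding matching frame (u',d',ℓ,r) with the same columns such that additionally M[k][ℓ..r] ≠ M[u'][ℓ..r] for every k with u' < k < d'. -/
theorem surrounding_frame_with_unique_rows {α : Type*} [DecidableEq α]
    (M : ℕ → ℕ → α) (n m : ℕ) (uR dR lR rR : ℕ)
    (hb1 : 1 ≤ uR) (hb2 : uR ≤ dR) (hb3 : dR ≤ n)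
    (hb4 : 1 ≤ lR) (hb5 : lR ≤ rR) (hb6 : rR ≤ m)
    (huniq : ∀ i j i' j', uR ≤ i → i ≤ dR → lR ≤ j → j ≤ rR →
      1 ≤ i' → i' ≤ n → 1 ≤ j' → j' ≤ m → (i', j') ≠ (i, j) → M i' j' ≠ M i j)
    (u d l r : ℕ)
    (h1u : 1 ≤ u) (hdn : d ≤ n) (h1l : 1 ≤ l) (hrm : r ≤ m)
    (hsu : u < uR) (hsd : dR < d) (hsl : l < lR) (hsr : rR < r)
    (hrow : ∀ j, l ≤ j → j ≤ r → M u j = M d j)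
    (hcol : ∀ i, u ≤ i → i ≤ d → M i l = M i r) :
    ∃ u' d', u ≤ u' ∧ u' < uR ∧ dR < d' ∧ d' ≤ d ∧
      (∀ j, l ≤ j → j ≤ r → M u' j = M d' j) ∧
      (∀ i, u' ≤ i → i ≤ d' → M i l = M i r) ∧
      (∀ k, u' < k → k < d' → ¬ (∀ j, l ≤ j → j ≤ r → M k j = M u' j)) := by
  classical
  set S : Finset ℕ := (Finset.Icc u (uR - 1)).filter
    (fun k => ∀ j, l ≤ j → j ≤ r → M k j = M u j) with hS
  set T : Finset ℕ := (Finset.Icc (dR + 1) d).filter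
    (fun k => ∀ j, l ≤ j → j ≤ r → M k j = M u j) with hT
  have huS : u ∈ S := by
    simp [hS, Finset.mem_filter, Finset.mem_Icc]
    omega
  have hdT : d ∈ T := by
    simp only [hT, Finset.mem_filter, Finset.mem_Icc]
    exact ⟨⟨by omega, le_refl d⟩, fun j h1 h2 => (hrow j h1 h2).symm⟩
  have hSne : S.Nonempty := ⟨u, huS⟩
  have hTne : T.Nonempty := ⟨d, hdT⟩
  set u' := S.max' hSne with hu'
  set d' := T.min' hTne with hd'
  have hu'S : u' ∈ S := S.max'_mem hSne
  have hd'T : d' ∈ T := T.min'_mem hTne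
  simp only [hS, Finset.mem_filter, Finset.mem_Icc] at hu'S
  simp only [hT, Finset.mem_filter, Finset.mem_Icc] at hd'T
  obtain ⟨⟨hu1, hu2⟩, hPu⟩ := hu'S
  obtain ⟨⟨hd1, hd2⟩, hPd⟩ := hd'T
  have hu2' : u' < uR := by omega
  have hPu' := hPu
  have hPd' := hPd
  refine ⟨u', d', hu1, hu2', by omega, hd2, ?_, ?_, ?_⟩
  · intro j h1 h2
    rw [hPu' j h1 h2, hPd' j h1 h2]
  · intro i hi1 hi2
    exact hcol i (le_trans hu1 hi1) (le_trans hi2 hd2)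
  · intro k hk1 hk2 hcon
    have hPk : ∀ j, l ≤ j → j ≤ r → M k j = M u j := fun j h1 h2 => by
      rw [hcon j h1 h2, hPu' j h1 h2]
    by_cases hc1 : k < uR
    · have : k ∈ S := by
        simp only [hS, Finset.mem_filter, Finset.mem_Icc]
        exact ⟨⟨by omega, by omega⟩, hPk⟩
      have := S.le_max' k this
      omega
    · by_cases hc2 : dR < k
      · have : k ∈ T := by
          simp only [hT, Finset.mem_filter, Finset.mem_Icc]
          exact ⟨⟨by omega, by omega⟩, hPk⟩
        have := T.min'_le k this
        omega
      · -- uR ≤ k ≤ dR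
        have hne : (u', lR) ≠ (k, lR) := by
          intro h
          have := (Prod.mk.injEq _ _ _ _).mp h
          omega
        have := huniq k lR u' lR (by omega) (by omega) le_rfl hb5 (by omega)
          (by omega) (by omega) (by omega) hne
        exact this (hcon lR (by omega) (by omega)).symm
end
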